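/- Let L = {g_n : n ∈ ℕ} be the language with countably many unary function symbols and A the L-algebra on ℕ where g_n swaps 2n and 2n+1 and fixes all other elements. For the two-variable system S(x,y) = {g_n(x)=x : n ≥ 1} ∪ {g_n(y)=y : n ≥ 1}, the solution set is V_A(S) = {(0,0),(0,1),(1,0),(1,1)}, and hence V_A(S) ⊆ V_A(x=y) ∪ V_A(x=g₀(y)), while V_A(S) ⊄ V_A(x=y) and V_A(S) ⊄ V_A(x=g₀(y)). -/
import Mathlib


open FirstOrder Language

/-- The language with countably many unary function symbols `g_n`. -/
def Lu : FirstOrder.Language :=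
  ⟨fun k => match k with | 1 => ℕ | _ => Empty, fun _ => Empty⟩

/-- `g n` swaps `2n` and `2n+1` and fixes everything else. -/
def g (n : ℕ) : ℕ → ℕ := fun x =>
  if x = 2 * n then 2 * n + 1 else if x = 2 * n + 1 then 2 * n else x

/-- The `Lu`-algebra `A` on `ℕ` where `g_n` acts as `g n`. -/
instance : Lu.Structure ℕ where
  funMap {k} f v :=
    match k, f, v with
    | 1, n, v => g n (v 0)
    | 0, f, _ => f.elim
    | (_ + 2), f, _ => f.elim
  RelMap {k} r _ := r.elim

/-- The term `g_n(t)`. -/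
def ap (n : ℕ) {α : Type} (t : Lu.Term α) : Lu.Term α :=
  Term.func (show Lu.Functions 1 from n) ![t]

/-- The solution set in `ℕ` of a system of `Lu`-equations in `n` variables. -/
def solSet {n : ℕ} (S : Set (Lu.Term (Fin n) × Lu.Term (Fin n))) :
    Set (Fin n → ℕ) :=
  {v | ∀ p ∈ S, p.1.realize v = p.2.realize v}

/-- The system `S(x,y) = {g_n(x) = x : n ≥ 1} ∪ {g_n(y) = y : n ≥ 1}`. -/
def S12 : Set (Lu.Term (Fin 2) × Lu.Term (Fin 2)) :=
  {e | ∃ n : ℕ, 1 ≤ n ∧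
    (e = (ap n (Term.var 0), Term.var 0) ∨ e = (ap n (Term.var 1), Term.var 1))}

@[simp] lemma funMap_one (n : ℕ) (v : Fin 1 → ℕ) :
    Structure.funMap (L := Lu) (M := ℕ) (n := 1) n v = g n (v 0) := rfl

lemma ap_realize (n : ℕ) (v : Fin 2 → ℕ) (t : Lu.Term (Fin 2)) :
    (ap n t).realize v = g n (t.realize v) := by
  simp [ap, Term.realize, Structure.funMap]

lemma g_fix_iff (a : ℕ) : (∀ n : ℕ, 1 ≤ n → g n a = a) ↔ a < 2 := by
  constructor
  · intro h
    by_contra hlt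
    push_neg at hlt
    have h1 : 1 ≤ a / 2 := by omega
    have := h (a / 2) h1
    unfold g at this
    split_ifs at this <;> omega
  · intro h n hn
    unfold g
    split <;> [omega; (split <;> omega)]

lemma mem_sol_iff (v : Fin 2 → ℕ) : v ∈ solSet S12 ↔ v 0 < 2 ∧ v 1 < 2 := by
  constructor
  · intro h
    constructor
    · rw [← g_fix_iff]
      intro n hn
      have := h (ap n (Term.var 0), Term.var 0) ⟨n, hn, Or.inl rfl⟩
      simpa [ap_realize, Term.realize] using this
    · rw [← g_fix_iff]
      intro n hn
      have := h (ap n (Term.var 1), Term.var 1) ⟨n, hn, Or.inr rfl⟩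
      simpa [ap_realize, Term.realize] using this
  · rintro ⟨h0, h1⟩ p ⟨n, hn, hp | hp⟩ <;> subst hp <;>
      simp [ap_realize, Term.realize] <;>
      [exact (g_fix_iff _).2 h0 n hn; exact (g_fix_iff _).2 h1 n hn]

/-- For the system `S(x,y)` above, `V_A(S) = {(0,0),(0,1),(1,0),(1,1)}`, hence
`V_A(S) ⊆ V_A(x=y) ∪ V_A(x=g₀(y))`, while `V_A(S) ⊄ V_A(x=y)` and
`V_A(S) ⊄ V_A(x=g₀(y))`. -/
theorem stmt12 :
    solSet S12 = {![0, 0], ![0, 1], ![1, 0], ![1, 1]} ∧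
      solSet S12 ⊆
        solSet {((Term.var 0 : Lu.Term (Fin 2)), Term.var 1)} ∪
          solSet {((Term.var 0 : Lu.Term (Fin 2)), ap 0 (Term.var 1))} ∧
      ¬solSet S12 ⊆ solSet {((Term.var 0 : Lu.Term (Fin 2)), Term.var 1)} ∧
      ¬solSet S12 ⊆ solSet {((Term.var 0 : Lu.Term (Fin 2)), ap 0 (Term.var 1))} := by
  have key : solSet S12 = {![0, 0], ![0, 1], ![1, 0], ![1, 1]} := by
    ext v
    rw [mem_sol_iff]
    constructor
    · rintro ⟨h0, h1⟩
      have hv : v = ![v 0, v 1] := by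
        funext i; fin_cases i <;> rfl
      interval_cases h : v 0 <;> interval_cases h' : v 1 <;>
        simp_all [Set.mem_insert_iff] <;> tauto
    · intro hv
      rcases hv with h | h | h | h <;> subst h <;> simp
  refine ⟨key, ?_, ?_, ?_⟩
  · intro v hv
    rw [key] at hv
    rcases hv with h | h | h | h <;> subst h <;>
      simp [solSet, Term.realize, ap_realize, Set.mem_union, g]
  · intro h
    have : (![0, 1] : Fin 2 → ℕ) ∈ solSet S12 := by rw [key]; simp
    have := h this ((Term.var 0 : Lu.Term (Fin 2)), (Term.var 1 : Lu.Term (Fin 2))) rfl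
    simp [Term.realize] at this
  · intro h
    have : (![0, 0] : Fin 2 → ℕ) ∈ solSet S12 := by rw [key]; simp
    have := h this ((Term.var 0 : Lu.Term (Fin 2)), ap 0 (Term.var 1)) rfl
    simp [Term.realize, ap_realize, g] at this
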